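/- Let (M,g) be a maximally symmetric space of dimension n, i.e. R_{abcd} = λ(g_{ac} g_{bd} − g_{ad} g_{bc}) with λ constant. If 𝒜 is a Killing-Yano tensor of order p, then its covariant derivative ℋ_{b c d E} := ∇_b 𝒜_{c d E} is a closed conformal Killing-Yano tensor of order p+1, satisfying ∇_a ℋ_{b c d E} = 2 g_{a[b} J_{c d E]} with J_{c d E} = −(λ/2)(p+1) 𝒜_{c d E}. -/

import Mathlib

/-!
Write `E(x, y; u) = ∑ᵢ g_{x uᵢ} 𝒜(u₁, …, y, …, u_p)` (`y` in slot `i`). In a maximally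
symmetric space the Ricci identity reads `∇ₓ∇_y𝒜 − ∇_y∇ₓ𝒜 = λ (E(x, y) − E(y, x))`, and the
differentiated Killing–Yano equation makes `T_{xyc} = ∇ₓ∇_y𝒜_{cE}` antisymmetric in `y, c`.
Such a `T` is recovered from `K_{xyc} = T_{xyc} − T_{yxc}` by
`2 T_{xyc} = K_{xyc} − K_{ycx} + K_{cxy}`, and the alternation of `𝒜` collapses the resulting
cyclic sum of `E`'s to `2λ (E(a, b; v) − g_{ab} 𝒜_v)`. Expanding the antisymmetrisation,
`(p + 1) g_{a[b} 𝒜_{v]} = g_{ab} 𝒜_v − E(a, b; v)`.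
-/

open Finset

/-- The sign of a permutation, as a real number. -/
noncomputable def esign {p : ℕ} (σ : Equiv.Perm (Fin p)) : ℝ :=
  ((Equiv.Perm.sign σ : ℤ) : ℝ)

/-- A rank-`p` tensor (in components) is totally antisymmetric. -/
def IsAlt {ι : Type*} {p : ℕ} (T : (Fin p → ι) → ℝ) : Prop :=
  ∀ (σ : Equiv.Perm (Fin p)) (v : Fin p → ι), T (v ∘ σ) = esign σ * T v

/-- Antisymmetrization of a rank-`p` tensor (with the `1/p!` factor). -/
noncomputable def alt {ι : Type*} {p : ℕ} (T : (Fin p → ι) → ℝ) : (Fin p → ι) → ℝ :=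
  fun v => (Nat.factorial p : ℝ)⁻¹ * ∑ σ : Equiv.Perm (Fin p), esign σ * T (v ∘ σ)

/-- The tensor `g_{a[b₁} h_{b₂…b_{q+1}]}` :
antisymmetrization over the last `q+1` indices of `g_{a b₁} h_{b₂…b_{q+1}}`. -/
noncomputable def ghAlt {ι : Type*} {q : ℕ} (g : ι → ι → ℝ) (h : (Fin q → ι) → ℝ)
    (a : ι) : (Fin (q + 1) → ι) → ℝ :=
  alt fun v => g a (v 0) * h fun i => v i.succ

/-- View a "derivative" `D : ι → ((Fin p → ι) → ℝ)` as a rank-`(p+1)` tensor. -/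
def totalD {ι : Type*} {p : ℕ} (D : ι → (Fin p → ι) → ℝ) : (Fin (p + 1) → ι) → ℝ :=
  fun w => D (w 0) fun i => w i.succ

open Function

section Alternating

variable {ι : Type*}

theorem esign_mul {p : ℕ} (σ τ : Equiv.Perm (Fin p)) : esign (σ * τ) = esign σ * esign τ := by
  simp [esign]

theorem esign_mul_self {p : ℕ} (σ : Equiv.Perm (Fin p)) : esign σ * esign σ = 1 := by
  rw [← esign_mul, esign, Equiv.Perm.sign_mul, Int.units_mul_self]
  simp

theorem esign_swap {p : ℕ} {i j : Fin p} (h : i ≠ j) : esign (Equiv.swap i j) = -1 := by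
  simp [esign, Equiv.Perm.sign_swap h]

theorem IsAlt.apply_comp_swap {p : ℕ} {T : (Fin p → ι) → ℝ} (hT : IsAlt T) {i j : Fin p}
    (hij : i ≠ j) (v : Fin p → ι) : T (v ∘ Equiv.swap i j) = -T v := by
  rw [hT, esign_swap hij, neg_one_mul]

theorem IsAlt.apply_update_update_swap {p : ℕ} {T : (Fin p → ι) → ℝ}
    (hT : IsAlt T) {i j : Fin p} (hij : i ≠ j) (v : Fin p → ι) (y z : ι) :
    T (update (update v i y) j z) = -T (update (update v i z) j y) := by
  rw [← hT.apply_comp_swap hij]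
  congr 1
  funext k
  rcases eq_or_ne k i with rfl | hki
  · simp [update_of_ne hij]
  rcases eq_or_ne k j with rfl | hkj
  · simp [update_of_ne hij]
  · simp [Equiv.swap_apply_of_ne_of_ne hki hkj, update_of_ne hki, update_of_ne hkj]

theorem IsAlt.apply_cons_eq_neg {n : ℕ} {T : (Fin (n + 2) → ι) → ℝ} (hT : IsAlt T) (y : ι)
    (u : Fin (n + 1) → ι) : T (Fin.cons y u) = -T (Fin.cons (u 0) (update u 0 y)) := by
  have hcons : (Fin.cons y u : Fin (n + 2) → ι) ∘ Equiv.swap 0 1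
      = Fin.cons (u 0) (update u 0 y) := by
    funext k
    refine Fin.cases ?_ (fun i => ?_) k
    · rw [comp_apply, Equiv.swap_apply_left, ← Fin.succ_zero_eq_one, Fin.cons_succ,
        Fin.cons_zero]
    rcases eq_or_ne i 0 with rfl | hi
    · rw [comp_apply, Fin.succ_zero_eq_one, Equiv.swap_apply_right, Fin.cons_zero,
        ← Fin.succ_zero_eq_one, Fin.cons_succ, update_self]
    · have hi1 : i.succ ≠ 1 := by rwa [← Fin.succ_zero_eq_one, Ne, Fin.succ_inj]
      simp [Equiv.swap_apply_of_ne_of_ne (Fin.succ_ne_zero i) hi1, update_of_ne hi]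
  rw [← hcons, hT.apply_comp_swap Fin.zero_ne_one', neg_neg]

theorem alt_isAlt {p : ℕ} (T : (Fin p → ι) → ℝ) : IsAlt (alt T) := by
  intro σ v
  have hsum : ∑ τ : Equiv.Perm (Fin p), esign τ * T ((v ∘ σ) ∘ τ)
      = esign σ * ∑ τ : Equiv.Perm (Fin p), esign τ * T (v ∘ τ) := by
    rw [mul_sum]
    refine Fintype.sum_equiv (Equiv.mulLeft σ) _ _ fun τ => ?_
    simp only [Equiv.coe_mulLeft, esign_mul, Equiv.Perm.coe_mul, comp_assoc]
    linear_combination -(esign τ * T (v ∘ σ ∘ τ)) * esign_mul_self σ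
  simp only [alt, hsum]
  ring

theorem isAlt_of_alt_eq {p : ℕ} {T : (Fin p → ι) → ℝ} (h : alt T = T) : IsAlt T :=
  h ▸ alt_isAlt T

theorem alt_const_mul {p : ℕ} (c : ℝ) (T : (Fin p → ι) → ℝ) (v : Fin p → ι) :
    alt (fun u => c * T u) v = c * alt T v := by
  simp only [alt, mul_left_comm _ c, ← mul_sum]

end Alternating

section Expansion

variable {ι : Type*}

theorem alt_mul_tail_eq_sum {q : ℕ} (G : ι → ℝ) {h : (Fin q → ι) → ℝ} (hh : IsAlt h)
    (w : Fin (q + 1) → ι) :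
    ((q : ℝ) + 1) * alt (fun u => G (u 0) * h fun i => u i.succ) w
      = ∑ k, (if k = 0 then 1 else -1) * (G (w k) * h fun i => (w ∘ Equiv.swap 0 k) i.succ) := by
  set F : Fin (q + 1) → ℝ := fun k =>
    (if k = 0 then 1 else -1) * (G (w k) * h fun i => (w ∘ Equiv.swap 0 k) i.succ)
  have hterm : ∀ k (ρ : Equiv.Perm (Fin q)),
      esign (Equiv.Perm.decomposeFin.symm (k, ρ))
        * (G ((w ∘ Equiv.Perm.decomposeFin.symm (k, ρ)) 0)
          * h fun i => (w ∘ Equiv.Perm.decomposeFin.symm (k, ρ)) i.succ) = F k := by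
    intro k ρ
    have hsign : esign (Equiv.Perm.decomposeFin.symm (k, ρ))
        = (if k = 0 then 1 else -1) * esign ρ := by
      simp only [esign, Equiv.Perm.decomposeFin.symm_sign]
      split_ifs <;> simp
    have htail : (fun i => (w ∘ Equiv.Perm.decomposeFin.symm (k, ρ)) i.succ)
        = (fun i => (w ∘ Equiv.swap 0 k) i.succ) ∘ ρ := by
      funext i
      simp [Equiv.Perm.decomposeFin_symm_apply_succ]
    rw [htail, hh, hsign, comp_apply, Equiv.Perm.decomposeFin_symm_apply_zero]
    linear_combination (F k) * esign_mul_self ρ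
  have hsum : ∑ σ : Equiv.Perm (Fin (q + 1)),
      esign σ * (G ((w ∘ σ) 0) * h fun i => (w ∘ σ) i.succ) = q.factorial * ∑ k, F k := by
    rw [← Equiv.sum_comp Equiv.Perm.decomposeFin.symm, Fintype.sum_prod_type, mul_sum]
    simp only [hterm, sum_const, card_univ, Fintype.card_perm, Fintype.card_fin, nsmul_eq_mul]
  rw [alt, hsum, Nat.factorial_succ]
  push_cast
  field_simp

noncomputable def metricExchange {p : ℕ} (g : ι → ι → ℝ) (A : (Fin p → ι) → ℝ) (x y : ι)
    (v : Fin p → ι) : ℝ :=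
  ∑ i, g x (v i) * A (update v i y)

theorem ghAlt_const_mul {q : ℕ} (g : ι → ι → ℝ) (c : ℝ) (h : (Fin q → ι) → ℝ) (a : ι)
    (w : Fin (q + 1) → ι) : ghAlt g (fun u => c * h u) a w = c * ghAlt g h a w := by
  rw [ghAlt, ghAlt, ← alt_const_mul]
  simp only [mul_left_comm c]

theorem mul_ghAlt_cons {q : ℕ} (g : ι → ι → ℝ) {h : (Fin q → ι) → ℝ} (hh : IsAlt h)
    (a b : ι) (v : Fin q → ι) :
    ((q : ℝ) + 1) * ghAlt g h a (Fin.cons b v) = g a b * h v - metricExchange g h a b v := by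
  have hswap : ∀ i : Fin q,
      (fun j => (Fin.cons b v ∘ Equiv.swap 0 i.succ) j.succ) = update v i b := by
    intro i
    funext j
    rcases eq_or_ne j i with rfl | hji
    · simp
    · have hne : j.succ ≠ i.succ := (Fin.succ_injective _).ne hji
      simp [Equiv.swap_apply_of_ne_of_ne (Fin.succ_ne_zero j) hne, update_of_ne hji]
  rw [ghAlt, alt_mul_tail_eq_sum _ hh, Fin.sum_univ_succ, metricExchange, sub_eq_add_neg,
    ← sum_neg_distrib]
  congr 1
  · simp
  · refine sum_congr rfl fun i _ => ?_
    rw [if_neg (Fin.succ_ne_zero i), hswap]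
    simp

theorem metricExchange_update_zero_add {n : ℕ} (g : ι → ι → ℝ) {A : (Fin (n + 1) → ι) → ℝ}
    (hA : IsAlt A) (x y z : ι) (v : Fin (n + 1) → ι) :
    metricExchange g A x y (update v 0 z) + metricExchange g A x z (update v 0 y)
      = g x z * A (update v 0 y) + g x y * A (update v 0 z) := by
  rw [metricExchange, metricExchange, ← sum_add_distrib, Fin.sum_univ_succ]
  have hsucc : ∀ i : Fin n,
      g x (update v 0 z i.succ) * A (update (update v 0 z) i.succ y)
        + g x (update v 0 y i.succ) * A (update (update v 0 y) i.succ z) = 0 := by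
    intro i
    rw [hA.apply_update_update_swap (Fin.succ_ne_zero i).symm]
    simp
  simp only [hsucc, sum_const_zero, add_zero, update_self, update_idem]

end Expansion

section Curvature

variable {ι : Type*} [Fintype ι] [DecidableEq ι] {g ginv : ι → ι → ℝ}

theorem sum_mul_inv_eq_ite (hinv : ∀ a b, ∑ c, ginv a c * g c b = if a = b then (1 : ℝ) else 0)
    (z f : ι) : ∑ e, g z e * ginv e f = if z = f then 1 else 0 := by
  have hleft : Matrix.of ginv * Matrix.of g = 1 := by
    ext a b
    simp [Matrix.mul_apply, Matrix.one_apply, hinv]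
  have hright : Matrix.of g * Matrix.of ginv = 1 := mul_eq_one_comm.mp hleft
  simpa [Matrix.mul_apply, Matrix.one_apply] using congrFun₂ hright z f

theorem sum_sum_mul_inv_mul
    (hinv : ∀ a b, ∑ c, ginv a c * g c b = if a = b then (1 : ℝ) else 0) (z : ι) (T : ι → ℝ) :
    ∑ e, ∑ f, g z e * ginv e f * T f = T z := by
  rw [sum_comm]
  simp [← sum_mul, sum_mul_inv_eq_ite hinv]

theorem sum_sum_riem_mul_inv_mul
    (hinv : ∀ a b, ∑ c, ginv a c * g c b = if a = b then (1 : ℝ) else 0)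
    {lam : ℝ} {Riem : ι → ι → ι → ι → ℝ}
    (hmax : ∀ a b c d, Riem a b c d = lam * (g a c * g b d - g a d * g b c))
    (x y c : ι) (T : ι → ℝ) :
    ∑ e, ∑ f, Riem x y c e * ginv e f * T f = lam * (g x c * T y - g y c * T x) := by
  have hsplit : ∀ e f, Riem x y c e * ginv e f * T f
      = lam * g x c * (g y e * ginv e f * T f) - lam * g y c * (g x e * ginv e f * T f) := by
    intro e f
    rw [hmax]
    ring
  simp only [hsplit, sum_sub_distrib, ← mul_sum, sum_sum_mul_inv_mul hinv]
  ring

end Curvature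

theorem two_mul_eq_of_antisymm {α R : Type*} [CommRing R] (T : α → α → α → R)
    (hT : ∀ x y z, T x y z = -T x z y) (x y z : α) :
    2 * T x y z = (T x y z - T y x z) - (T y z x - T z y x) + (T z x y - T x z y) := by
  linear_combination hT y z x - hT z y x + hT x z y

theorem eq_metricExchange_of_antisymm_of_ricci {ι : Type*} {n : ℕ} {g : ι → ι → ℝ}
    (hg : ∀ a b, g a b = g b a) {A : (Fin (n + 1) → ι) → ℝ} (hA : IsAlt A) {lam : ℝ}
    {T : ι → ι → (Fin (n + 1) → ι) → ℝ} (hT : ∀ x y u, T x y u = -T x (u 0) (update u 0 y))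
    (hR : ∀ x y u, T x y u - T y x u
      = lam * (metricExchange g A x y u - metricExchange g A y x u))
    (a b : ι) (v : Fin (n + 1) → ι) :
    T a b v = lam * (metricExchange g A a b v - g a b * A v) := by
  have hcyc := two_mul_eq_of_antisymm (fun x y z => T x y (update v 0 z))
    (fun x y z => by simpa using hT x y (update v 0 z)) a b (v 0)
  have hp1 := metricExchange_update_zero_add g hA b a (v 0) v
  have hp2 := metricExchange_update_zero_add g hA (v 0) b a v
  have hp3 := metricExchange_update_zero_add g hA a (v 0) b v
  simp only [update_eq_self] at hcyc hp1 hp3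
  rw [hg b a] at hp1
  rw [hg (v 0) a, hg (v 0) b] at hp2
  linear_combination (hcyc + hR a b v - hR b (v 0) (update v 0 a) + hR (v 0) a (update v 0 b)
    - lam * (hp1 - hp2 + hp3)) / 2

theorem statement15_general {ι : Type*} [Fintype ι] [DecidableEq ι] {r : ℕ}
    (g ginv : ι → ι → ℝ)
    (hgsymm : ∀ a b, g a b = g b a)
    (hinv : ∀ a b, ∑ c, ginv a c * g c b = if a = b then (1 : ℝ) else 0)
    (lam : ℝ) (Riem : ι → ι → ι → ι → ℝ)
    (hmax : ∀ a b c d, Riem a b c d = lam * (g a c * g b d - g a d * g b c))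
    (A : (Fin (r + 2) → ι) → ℝ) (hAalt : IsAlt A)
    (DDA : ι → ι → (Fin (r + 2) → ι) → ℝ)
    (hDKY : ∀ (a b : ι) (v : Fin (r + 2) → ι),
      DDA a b v = alt (totalD (DDA a)) (Fin.cons b v))
    (hRicciId : ∀ (a b : ι) (v : Fin (r + 2) → ι),
      DDA a b v - DDA b a v
        = ∑ i : Fin (r + 2), ∑ e, ∑ f,
            Riem a b (v i) e * ginv e f * A (Function.update v i f)) :
    ∀ (a b : ι) (v : Fin (r + 2) → ι),
      DDA a b v
        = 2 * ghAlt g (fun u : Fin (r + 2) → ι => -(lam / 2) * ((r : ℝ) + 3) * A u)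
            a (Fin.cons b v) := by
  intro a b v
  have hDDAalt : ∀ x, IsAlt (totalD (DDA x)) := fun x =>
    isAlt_of_alt_eq <| funext fun w => by
      rw [← Fin.cons_self_tail w]
      exact (hDKY x (w 0) (Fin.tail w)).symm
  have hswap : ∀ x y u, DDA x y u = -DDA x (u 0) (update u 0 y) := fun x y u => by
    simpa [totalD] using (hDDAalt x).apply_cons_eq_neg y u
  have hricci : ∀ x y u, DDA x y u - DDA y x u
      = lam * (metricExchange g A x y u - metricExchange g A y x u) := by
    intro x y u
    simp only [hRicciId, metricExchange, ← sum_sub_distrib, mul_sum,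
      sum_sum_riem_mul_inv_mul hinv hmax]
  have hexpand := mul_ghAlt_cons g hAalt a b v
  push_cast at hexpand
  rw [eq_metricExchange_of_antisymm_of_ricci hgsymm hAalt hswap hricci, ghAlt_const_mul]
  linear_combination lam * hexpand

/-- Let the manifold be maximally symmetric,
`R_{abcd} = λ (g_{ac} g_{bd} − g_{ad} g_{bc})`.  If `𝒜` is a Killing–Yano tensor of
order `p = r+2` (with `D = ∇𝒜` totally antisymmetric, and `DD𝒜 = ∇∇𝒜` subject to
the Ricci identity and the differentiated KY equation), then its covariant
derivative `ℋ_{b c d E} = ∇_b 𝒜_{c d E}` is a closed conformal Killing–Yano tensor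
of order `p+1`: `∇_a ℋ_{bcdE} = 2 g_{a[b} J_{cdE]}` with `J = −(λ/2)(p+1) 𝒜`. -/
theorem statement15 {ι : Type*} [Fintype ι] [DecidableEq ι] {r : ℕ}
    (g ginv : ι → ι → ℝ)
    (hgsymm : ∀ a b, g a b = g b a) (hginvsymm : ∀ a b, ginv a b = ginv b a)
    (hinv : ∀ a b, ∑ c, ginv a c * g c b = if a = b then (1 : ℝ) else 0)
    (lam : ℝ) (Riem : ι → ι → ι → ι → ℝ)
    (hmax : ∀ a b c d, Riem a b c d = lam * (g a c * g b d - g a d * g b c))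
    (A : (Fin (r + 2) → ι) → ℝ) (hAalt : IsAlt A)
    (D : ι → (Fin (r + 2) → ι) → ℝ) (hDalt : ∀ a, IsAlt (D a))
    (hKY : ∀ (a : ι) (v : Fin (r + 2) → ι), D a v = alt (totalD D) (Fin.cons a v))
    (DDA : ι → ι → (Fin (r + 2) → ι) → ℝ)
    (hDKY : ∀ (a b : ι) (v : Fin (r + 2) → ι),
      DDA a b v = alt (totalD (DDA a)) (Fin.cons b v))
    (hRicciId : ∀ (a b : ι) (v : Fin (r + 2) → ι),
      DDA a b v - DDA b a v
        = ∑ i : Fin (r + 2), ∑ e, ∑ f,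
            Riem a b (v i) e * ginv e f * A (Function.update v i f)) :
    ∀ (a b : ι) (v : Fin (r + 2) → ι),
      DDA a b v
        = 2 * ghAlt g (fun u : Fin (r + 2) → ι => -(lam / 2) * ((r : ℝ) + 3) * A u)
            a (Fin.cons b v) :=
  statement15_general g ginv hgsymm hinv lam Riem hmax A hAalt DDA hDKY hRicciId
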